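/- Let A and σ be n×n real matrices and let 0 < s < t. Then λ(t) ≥ λ₂(t)/t ≥ (λ(t−s)/t) · inf_{‖x‖=1} ∫₀^s ‖e^{−vAᵀ} x‖² dv, where λ(t) := inf_{‖x‖=1} ⟨G_t x, x⟩ and λ₂(t) := inf_{‖x‖=1} ⟨G_{2,t} x, x⟩. -/

import Mathlib

/- Setting: n×n real matrices A, σ; SDE dx = Ax dt + σ dB on ℝⁿ. -/

open MeasureTheory Matrix

noncomputable section

abbrev Vec (n : ℕ) := Fin n → ℝ
abbrev Mat (n : ℕ) := Matrix (Fin n) (Fin n) ℝ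

/-- matrix exponential e^M -/
def mexp {n : ℕ} (M : Mat n) : Mat n := NormedSpace.exp M

/-- The n×n² Kalman block matrix [σ, Aσ, A²σ, …, A^{n-1}σ]. -/
def kalmanMatrix {n : ℕ} (A σ : Mat n) : Matrix (Fin n) (Fin n × Fin n) ℝ :=
  Matrix.of fun i p => (A ^ (p.1 : ℕ) * σ) i p.2

/-- The Kalman rank condition: rank [σ, Aσ, …, A^{n-1}σ] = n. -/
def KalmanRank {n : ℕ} (A σ : Mat n) : Prop := (kalmanMatrix A σ).rank = n

/-- Σ_t = ∫₀ᵗ e^{(t-s)A} σσᵀ e^{(t-s)Aᵀ} ds, the integral taken entrywise. -/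
def SigmaMat {n : ℕ} (A σ : Mat n) (t : ℝ) : Mat n :=
  Matrix.of fun i j =>
    ∫ s in (0:ℝ)..t, (mexp ((t - s) • A) * (σ * σᵀ) * mexp ((t - s) • Aᵀ)) i j

open Classical in
/-- The positive semidefinite square root of a PSD matrix (junk value 0 otherwise). -/
def psdSqrt {n : ℕ} (M : Mat n) : Mat n := if h : M.PosSemidef then
    h.1.eigenvectorUnitary.1 * diagonal ((RCLike.ofReal : ℝ → ℝ) ∘ (√·) ∘ h.1.eigenvalues) *
      (star h.1.eigenvectorUnitary : Mat n) else 0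

/-- standard Gaussian measure on ℝⁿ -/
def stdGaussian (n : ℕ) : Measure (Vec n) :=
  Measure.pi fun _ => ProbabilityTheory.gaussianReal 0 1

/-- The Markov semigroup: P_t f(x) = 𝔼[f(e^{tA}x + Σ_t^{1/2} Z)], Z standard Gaussian. -/
def Pt {n : ℕ} (A σ : Mat n) (t : ℝ) (f : Vec n → ℝ) (x : Vec n) : ℝ :=
  ∫ z, f (mexp (t • A) *ᵥ x + psdSqrt (SigmaMat A σ t) *ᵥ z) ∂(stdGaussian n)

/-- partial derivative ∂_i f(x) -/
def pd {n : ℕ} (i : Fin n) (f : Vec n → ℝ) (x : Vec n) : ℝ := fderiv ℝ f x (Pi.single i 1)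

/-- gradient ∇f(x) -/
def gradV {n : ℕ} (f : Vec n → ℝ) (x : Vec n) : Vec n := fun i => pd i f x

/-- Γ^G(f,g)(x) = ⟨G∇f(x), ∇g(x)⟩ -/
def GammaOp {n : ℕ} (G : Mat n) (f g : Vec n → ℝ) (x : Vec n) : ℝ :=
  (G *ᵥ gradV f x) ⬝ᵥ gradV g x

/-- The generator L f(x) = ⟨Ax, ∇f(x)⟩ + ½ Σᵢⱼ (σσᵀ)ᵢⱼ ∂ᵢ∂ⱼ f(x). -/
def Lop {n : ℕ} (A σ : Mat n) (f : Vec n → ℝ) (x : Vec n) : ℝ :=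
  (A *ᵥ x) ⬝ᵥ gradV f x + (1/2) * ∑ i, ∑ j, (σ * σᵀ) i j * pd i (pd j f) x

/-- Γ₂^G(f) = ½ L Γ^G(f) − Γ^G(f, Lf). -/
def Gamma2Op {n : ℕ} (A σ G : Mat n) (f : Vec n → ℝ) (x : Vec n) : ℝ :=
  (1/2) * Lop A σ (GammaOp G f f) x - GammaOp G f (Lop A σ f) x

/-- G_t = ∫₀ᵗ e^{-vA} σσᵀ e^{-vAᵀ} dv, entrywise. -/
def Gt {n : ℕ} (A σ : Mat n) (t : ℝ) : Mat n :=
  Matrix.of fun i j => ∫ v in (0:ℝ)..t, (mexp ((-v) • A) * (σ * σᵀ) * mexp ((-v) • Aᵀ)) i j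

/-- control distance ρ_t(x,y) = √⟨G_t⁻¹(x−y), x−y⟩ -/
def rhoT {n : ℕ} (A σ : Mat n) (t : ℝ) (x y : Vec n) : ℝ :=
  Real.sqrt (((Gt A σ t)⁻¹ *ᵥ (x - y)) ⬝ᵥ (x - y))

/-- G(s,t) = ∫ₛᵗ e^{(s−v)A} σσᵀ e^{(s−v)Aᵀ} dv, entrywise. -/
def Gst {n : ℕ} (A σ : Mat n) (s t : ℝ) : Mat n :=
  Matrix.of fun i j => ∫ v in s..t, (mexp ((s - v) • A) * (σ * σᵀ) * mexp ((s - v) • Aᵀ)) i j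

/-- The iterate G_{2,t} = ∫₀ᵗ e^{−vA} G(v,t) e^{−vAᵀ} dv, entrywise. -/
def G2t {n : ℕ} (A σ : Mat n) (t : ℝ) : Mat n :=
  Matrix.of fun i j => ∫ v in (0:ℝ)..t, (mexp ((-v) • A) * Gst A σ v t * mexp ((-v) • Aᵀ)) i j

/-- λ(t) = inf_{‖x‖=1} ⟨G_t x, x⟩. -/
def lamT {n : ℕ} (A σ : Mat n) (t : ℝ) : ℝ :=
  sInf { r : ℝ | ∃ x : Vec n, x ⬝ᵥ x = 1 ∧ r = (Gt A σ t *ᵥ x) ⬝ᵥ x }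

/-- λ₂(t) = inf_{‖x‖=1} ⟨G_{2,t} x, x⟩. -/
def lam2T {n : ℕ} (A σ : Mat n) (t : ℝ) : ℝ :=
  sInf { r : ℝ | ∃ x : Vec n, x ⬝ᵥ x = 1 ∧ r = (G2t A σ t *ᵥ x) ⬝ᵥ x }

/-!
Write `q_x(u) = |σᵀ e^{-uAᵀ} x|²`. Then `⟨G_r x, x⟩ = ∫₀^r q_x`, and since `e^{-vAᵀ}` is a flow,
`⟨G_r e^{-vAᵀ}x, e^{-vAᵀ}x⟩ = ∫_v^{v+r} q_x`; with `G(v,t) = G_{t-v}` this gives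
`⟨G_{2,t} x, x⟩ = ∫₀^t ∫_v^t q_x(u) du dv`. As `q_x ≥ 0`, the inner integral is at most
`⟨G_t x, x⟩`, which gives the first inequality. For `v ≤ s` it is at least
`∫_v^{v+t-s} q_x = ⟨G_{t-s} e^{-vAᵀ}x, e^{-vAᵀ}x⟩ ≥ λ(t-s) |e^{-vAᵀ}x|²`, which gives the second.
-/

section SphereInf

variable {n : ℕ}

/-- `lamT`, `lam2T` and the last infimum in `stmt_11` are definitionally of this form. -/
def sphereInf (f : Vec n → ℝ) : ℝ :=
  sInf {r : ℝ | ∃ x : Vec n, x ⬝ᵥ x = 1 ∧ r = f x}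

lemma sphereInf_nonneg {f : Vec n → ℝ} (hf : 0 ≤ f) : 0 ≤ sphereInf f :=
  Real.sInf_nonneg <| by rintro _ ⟨x, -, rfl⟩; exact hf x

lemma sphereInf_le {f : Vec n → ℝ} (hf : 0 ≤ f) {x : Vec n} (hx : x ⬝ᵥ x = 1) :
    sphereInf f ≤ f x :=
  csInf_le ⟨0, by rintro _ ⟨y, -, rfl⟩; exact hf y⟩ ⟨x, hx, rfl⟩

lemma sphereInf_mono {f g : Vec n → ℝ} (hf : 0 ≤ f) (hfg : ∀ x, x ⬝ᵥ x = 1 → f x ≤ g x) :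
    sphereInf f ≤ sphereInf g := by
  by_cases hS : ∃ x : Vec n, x ⬝ᵥ x = 1
  · obtain ⟨x₀, hx₀⟩ := hS
    refine le_csInf ⟨g x₀, x₀, hx₀, rfl⟩ ?_
    rintro _ ⟨x, hx, rfl⟩
    exact (sphereInf_le hf hx).trans (hfg x hx)
  · simp only [not_exists] at hS
    simp only [sphereInf, hS, false_and, exists_false, Set.ofPred_false, le_refl]

lemma sphereInf_const_mul (f : Vec n → ℝ) {a : ℝ} (ha : 0 ≤ a) :
    sphereInf (fun x => a * f x) = a * sphereInf f := by
  rw [sphereInf, sphereInf, ← smul_eq_mul, ← Real.sInf_smul_of_nonneg ha]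
  congr 1
  ext r
  simp only [Set.mem_ofPred_eq, Set.mem_smul_set, smul_eq_mul]
  constructor
  · rintro ⟨x, hx, rfl⟩; exact ⟨f x, ⟨x, hx, rfl⟩, rfl⟩
  · rintro ⟨_, ⟨x, hx, rfl⟩, rfl⟩; exact ⟨x, hx, rfl⟩

lemma sphereInf_mul_dotProduct_self_le {f : Vec n → ℝ} (hf : 0 ≤ f)
    (hhom : ∀ (c : ℝ) (x : Vec n), f (c • x) = c ^ 2 * f x) (y : Vec n) :
    sphereInf f * (y ⬝ᵥ y) ≤ f y := by
  have hy : 0 ≤ y ⬝ᵥ y := Finset.sum_nonneg fun _ _ => mul_self_nonneg _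
  rcases hy.eq_or_lt with h0 | hpos
  · rw [← h0, mul_zero]; exact hf y
  set c := (√(y ⬝ᵥ y))⁻¹
  have hc : c ^ 2 * (y ⬝ᵥ y) = 1 := by
    rw [inv_pow, Real.sq_sqrt hy, inv_mul_cancel₀ hpos.ne']
  have hunit : (c • y) ⬝ᵥ (c • y) = 1 := by
    rw [smul_dotProduct, dotProduct_smul, smul_eq_mul, smul_eq_mul, ← mul_assoc, ← sq, hc]
  calc sphereInf f * (y ⬝ᵥ y) ≤ c ^ 2 * f y * (y ⬝ᵥ y) := by
        gcongr; rw [← hhom]; exact sphereInf_le hf hunit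
    _ = f y := by linear_combination f y * hc

end SphereInf

section QuadraticForm

variable {ι : Type*} [Fintype ι]

lemma mul_mul_transpose_mulVec_dotProduct {R : Type*} [CommSemiring R] (P M : Matrix ι ι R)
    (x : ι → R) : ((P * M * Pᵀ) *ᵥ x) ⬝ᵥ x = (M *ᵥ (Pᵀ *ᵥ x)) ⬝ᵥ (Pᵀ *ᵥ x) := by
  rw [← mulVec_mulVec, ← mulVec_mulVec, dotProduct_comm, dotProduct_mulVec,
    ← mulVec_transpose, dotProduct_comm]

lemma mulVec_smul_dotProduct_smul {R : Type*} [CommSemiring R] (M : Matrix ι ι R) (c : R)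
    (x : ι → R) : (M *ᵥ (c • x)) ⬝ᵥ (c • x) = c ^ 2 * ((M *ᵥ x) ⬝ᵥ x) := by
  rw [mulVec_smul, smul_dotProduct, dotProduct_smul, smul_eq_mul, smul_eq_mul]; ring

lemma of_intervalIntegral_mulVec_dotProduct {F : ℝ → Matrix ι ι ℝ} {a b : ℝ}
    (hF : ∀ i j, IntervalIntegrable (fun v => F v i j) volume a b) (x : ι → ℝ) :
    ((Matrix.of fun i j => ∫ v in a..b, F v i j) *ᵥ x) ⬝ᵥ x = ∫ v in a..b, (F v *ᵥ x) ⬝ᵥ x := by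
  have hint : ∀ i j, IntervalIntegrable (fun v => F v i j * x j * x i) volume a b :=
    fun i j => ((hF i j).mul_const _).mul_const _
  have hrow : ∀ i, IntervalIntegrable (fun v => ∑ j, F v i j * x j * x i) volume a b :=
    fun i => by simpa only [Finset.sum_fn] using IntervalIntegrable.sum _ fun j _ => hint i j
  simp only [mulVec, dotProduct, of_apply, Finset.sum_mul]
  rw [intervalIntegral.integral_finsetSum fun i _ => hrow i]
  refine Finset.sum_congr rfl fun i _ => ?_
  rw [intervalIntegral.integral_finsetSum fun j _ => hint i j]
  simp only [intervalIntegral.integral_mul_const]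

end QuadraticForm

section MatrixExponential

variable {n : ℕ}

attribute [local instance] Matrix.linftyOpNormedRing Matrix.linftyOpNormedAlgebra in
lemma continuous_mexp_smul (B : Mat n) : Continuous fun v : ℝ => mexp (v • B) :=
  NormedSpace.exp_continuous.comp (continuous_id.smul continuous_const)

lemma continuous_mexp_neg_smul (B : Mat n) : Continuous fun v : ℝ => mexp ((-v) • B) :=
  (continuous_mexp_smul B).comp continuous_neg

lemma mexp_add_smul_mulVec (B : Mat n) (a b : ℝ) (x : Vec n) :
    mexp ((a + b) • B) *ᵥ x = mexp (a • B) *ᵥ (mexp (b • B) *ᵥ x) := by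
  rw [mulVec_mulVec, mexp, mexp, mexp, add_smul,
    Matrix.exp_add_of_commute _ _ (((Commute.refl B).smul_left a).smul_right b)]

lemma mexp_transpose (B : Mat n) : mexp Bᵀ = (mexp B)ᵀ :=
  Matrix.exp_transpose B

end MatrixExponential

section Gramian

variable {n : ℕ} (A σ : Mat n)

/-- `q_x(u)`, the derivative of `t ↦ ⟨G_t x, x⟩`. -/
def gramDensity (x : Vec n) (u : ℝ) : ℝ :=
  (σᵀ *ᵥ (mexp ((-u) • Aᵀ) *ᵥ x)) ⬝ᵥ (σᵀ *ᵥ (mexp ((-u) • Aᵀ) *ᵥ x))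

lemma gramDensity_nonneg (x : Vec n) (u : ℝ) : 0 ≤ gramDensity A σ x u := by
  unfold gramDensity; exact Finset.sum_nonneg fun _ _ => mul_self_nonneg _

lemma continuous_gramDensity (x : Vec n) : Continuous (gramDensity A σ x) := by
  have h : Continuous fun u : ℝ => σᵀ *ᵥ (mexp ((-u) • Aᵀ) *ᵥ x) :=
    continuous_const.matrix_mulVec ((continuous_mexp_neg_smul Aᵀ).matrix_mulVec continuous_const)
  exact h.dotProduct h

lemma gramDensity_mexp_mulVec (x : Vec n) (v w : ℝ) :
    gramDensity A σ (mexp ((-v) • Aᵀ) *ᵥ x) w = gramDensity A σ x (w + v) := by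
  rw [gramDensity, gramDensity, ← mexp_add_smul_mulVec, neg_add]

lemma intervalIntegrable_gramDensity (x : Vec n) (a b : ℝ) :
    IntervalIntegrable (gramDensity A σ x) volume a b :=
  (continuous_gramDensity A σ x).intervalIntegrable a b

lemma conj_mexp_mulVec_dotProduct (M : Mat n) (c : ℝ) (x : Vec n) :
    ((mexp (c • A) * M * mexp (c • Aᵀ)) *ᵥ x) ⬝ᵥ x
      = (M *ᵥ (mexp (c • Aᵀ) *ᵥ x)) ⬝ᵥ (mexp (c • Aᵀ) *ᵥ x) := by
  rw [← transpose_smul, mexp_transpose, mul_mul_transpose_mulVec_dotProduct]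

lemma continuous_Gt_integrand :
    Continuous fun v : ℝ => mexp ((-v) • A) * (σ * σᵀ) * mexp ((-v) • Aᵀ) :=
  ((continuous_mexp_neg_smul A).matrix_mul continuous_const).matrix_mul
    (continuous_mexp_neg_smul Aᵀ)

lemma Gt_mulVec_dotProduct (r : ℝ) (x : Vec n) :
    (Gt A σ r *ᵥ x) ⬝ᵥ x = ∫ u in (0:ℝ)..r, gramDensity A σ x u := by
  rw [Gt, of_intervalIntegral_mulVec_dotProduct fun i j =>
    ((continuous_Gt_integrand A σ).matrix_elem i j).intervalIntegrable 0 r]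
  refine intervalIntegral.integral_congr fun u _ => ?_
  rw [conj_mexp_mulVec_dotProduct, show σ * σᵀ = σ * 1 * σᵀ by rw [Matrix.mul_one],
    mul_mul_transpose_mulVec_dotProduct, one_mulVec, gramDensity]

lemma Gt_mulVec_dotProduct_mexp (r v : ℝ) (x : Vec n) :
    (Gt A σ r *ᵥ (mexp ((-v) • Aᵀ) *ᵥ x)) ⬝ᵥ (mexp ((-v) • Aᵀ) *ᵥ x)
      = ∫ u in v..r + v, gramDensity A σ x u := by
  simp only [Gt_mulVec_dotProduct, gramDensity_mexp_mulVec]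
  rw [intervalIntegral.integral_comp_add_right, zero_add]

lemma Gst_eq_Gt (v t : ℝ) : Gst A σ v t = Gt A σ (t - v) := by
  ext i j
  rw [Gst, Gt, of_apply, of_apply, ← zero_add v, ← sub_add_cancel t v,
    ← intervalIntegral.integral_comp_add_right, sub_add_cancel, zero_add]
  simp only [sub_add_eq_sub_sub_swap, sub_self, zero_sub]

lemma continuous_Gt : Continuous fun r : ℝ => Gt A σ r :=
  continuous_matrix fun i j => intervalIntegral.continuous_primitive
    (fun a b => ((continuous_Gt_integrand A σ).matrix_elem i j).intervalIntegrable a b) 0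

lemma G2t_mulVec_dotProduct (t : ℝ) (x : Vec n) :
    (G2t A σ t *ᵥ x) ⬝ᵥ x = ∫ v in (0:ℝ)..t, ∫ u in v..t, gramDensity A σ x u := by
  have hcont : Continuous fun v : ℝ => mexp ((-v) • A) * Gst A σ v t * mexp ((-v) • Aᵀ) := by
    simp only [Gst_eq_Gt]
    exact ((continuous_mexp_neg_smul A).matrix_mul
      ((continuous_Gt A σ).comp (continuous_const.sub continuous_id))).matrix_mul
      (continuous_mexp_neg_smul Aᵀ)
  rw [G2t, of_intervalIntegral_mulVec_dotProduct fun i j =>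
    (hcont.matrix_elem i j).intervalIntegrable 0 t]
  refine intervalIntegral.integral_congr fun v _ => ?_
  rw [conj_mexp_mulVec_dotProduct, Gst_eq_Gt, Gt_mulVec_dotProduct_mexp, sub_add_cancel]

end Gramian

section Eigenvalues

variable {n : ℕ} (A σ : Mat n)

lemma Gt_mulVec_dotProduct_nonneg {r : ℝ} (hr : 0 ≤ r) (x : Vec n) :
    0 ≤ (Gt A σ r *ᵥ x) ⬝ᵥ x := by
  rw [Gt_mulVec_dotProduct]
  exact intervalIntegral.integral_nonneg hr fun u _ => gramDensity_nonneg A σ x u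

lemma lamT_nonneg {r : ℝ} (hr : 0 ≤ r) : 0 ≤ lamT A σ r :=
  sphereInf_nonneg (Gt_mulVec_dotProduct_nonneg A σ hr)

lemma lamT_mul_dotProduct_self_le {r : ℝ} (hr : 0 ≤ r) (y : Vec n) :
    lamT A σ r * (y ⬝ᵥ y) ≤ (Gt A σ r *ᵥ y) ⬝ᵥ y :=
  sphereInf_mul_dotProduct_self_le (Gt_mulVec_dotProduct_nonneg A σ hr)
    (mulVec_smul_dotProduct_smul _) y

lemma continuous_integral_gramDensity_left (x : Vec n) (t : ℝ) :
    Continuous fun v => ∫ u in v..t, gramDensity A σ x u :=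
  (intervalIntegral.continuous_primitive (intervalIntegrable_gramDensity A σ x) t).neg.congr
    fun v => (intervalIntegral.integral_symm t v).symm

lemma integral_gramDensity_mono {a b c d : ℝ} (hca : c ≤ a) (hab : a ≤ b) (hbd : b ≤ d)
    (x : Vec n) : ∫ u in a..b, gramDensity A σ x u ≤ ∫ u in c..d, gramDensity A σ x u :=
  intervalIntegral.integral_mono_interval hca hab hbd
    (ae_of_all _ (gramDensity_nonneg A σ x)) (intervalIntegrable_gramDensity A σ x c d)

lemma G2t_mulVec_dotProduct_nonneg {t : ℝ} (ht : 0 ≤ t) (x : Vec n) :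
    0 ≤ (G2t A σ t *ᵥ x) ⬝ᵥ x := by
  rw [G2t_mulVec_dotProduct]
  exact intervalIntegral.integral_nonneg ht fun v hv =>
    intervalIntegral.integral_nonneg hv.2 fun u _ => gramDensity_nonneg A σ x u

lemma G2t_mulVec_dotProduct_le {t : ℝ} (ht : 0 ≤ t) (x : Vec n) :
    (G2t A σ t *ᵥ x) ⬝ᵥ x ≤ t * ((Gt A σ t *ᵥ x) ⬝ᵥ x) := by
  rw [G2t_mulVec_dotProduct, Gt_mulVec_dotProduct]
  calc ∫ v in (0:ℝ)..t, ∫ u in v..t, gramDensity A σ x u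
      ≤ ∫ _ in (0:ℝ)..t, ∫ u in (0:ℝ)..t, gramDensity A σ x u :=
        intervalIntegral.integral_mono_on ht
          ((continuous_integral_gramDensity_left A σ x t).intervalIntegrable 0 t)
          intervalIntegrable_const
          fun v hv => integral_gramDensity_mono A σ hv.1 hv.2 le_rfl x
    _ = t * ∫ u in (0:ℝ)..t, gramDensity A σ x u := by
        rw [intervalIntegral.integral_const, sub_zero, smul_eq_mul]

lemma lamT_mul_integral_le_G2t {s t : ℝ} (hs : 0 ≤ s) (hst : s ≤ t) (x : Vec n) :
    lamT A σ (t - s) * ∫ v in (0:ℝ)..s, (mexp ((-v) • Aᵀ) *ᵥ x) ⬝ᵥ (mexp ((-v) • Aᵀ) *ᵥ x)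
      ≤ (G2t A σ t *ᵥ x) ⬝ᵥ x := by
  have hy : Continuous fun v : ℝ => mexp ((-v) • Aᵀ) *ᵥ x :=
    (continuous_mexp_neg_smul Aᵀ).matrix_mulVec continuous_const
  have hI := continuous_integral_gramDensity_left A σ x t
  have hpointwise : ∀ v ∈ Set.Icc 0 s,
      lamT A σ (t - s) * ((mexp ((-v) • Aᵀ) *ᵥ x) ⬝ᵥ (mexp ((-v) • Aᵀ) *ᵥ x))
        ≤ ∫ u in v..t, gramDensity A σ x u := fun v hv =>
    calc _ ≤ (Gt A σ (t - s) *ᵥ (mexp ((-v) • Aᵀ) *ᵥ x)) ⬝ᵥ (mexp ((-v) • Aᵀ) *ᵥ x) :=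
          lamT_mul_dotProduct_self_le A σ (sub_nonneg.2 hst) _
      _ = ∫ u in v..t - s + v, gramDensity A σ x u := Gt_mulVec_dotProduct_mexp A σ _ v x
      _ ≤ ∫ u in v..t, gramDensity A σ x u :=
          integral_gramDensity_mono A σ le_rfl (by linarith) (by linarith [hv.2]) x
  rw [← intervalIntegral.integral_const_mul, G2t_mulVec_dotProduct]
  calc _ ≤ ∫ v in (0:ℝ)..s, ∫ u in v..t, gramDensity A σ x u :=
        intervalIntegral.integral_mono_on hs
          ((continuous_const.mul (hy.dotProduct hy)).intervalIntegrable 0 s)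
          (hI.intervalIntegrable 0 s) hpointwise
    _ ≤ ∫ v in (0:ℝ)..t, ∫ u in v..t, gramDensity A σ x u :=
        intervalIntegral.integral_mono_interval le_rfl hs hst
          (ae_restrict_of_forall_mem measurableSet_Ioc fun v hv =>
            intervalIntegral.integral_nonneg hv.2 fun u _ => gramDensity_nonneg A σ x u)
          (hI.intervalIntegrable 0 t)

end Eigenvalues

/-- for 0 < s < t,
λ(t) ≥ λ₂(t)/t ≥ (λ(t−s)/t) · inf_{‖x‖=1} ∫₀ˢ ‖e^{−vAᵀ}x‖² dv. -/
theorem stmt_11 {n : ℕ} (A σ : Mat n) (s t : ℝ) (hs : 0 < s) (hst : s < t) :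
    lamT A σ t ≥ lam2T A σ t / t ∧
    lam2T A σ t / t ≥ lamT A σ (t - s) / t *
      sInf { r : ℝ | ∃ x : Vec n, x ⬝ᵥ x = 1 ∧
        r = ∫ v in (0:ℝ)..s, (mexp ((-v) • Aᵀ) *ᵥ x) ⬝ᵥ (mexp ((-v) • Aᵀ) *ᵥ x) } := by
  have ht : 0 < t := hs.trans hst
  constructor
  · have hle : lam2T A σ t ≤ t * lamT A σ t :=
      calc lam2T A σ t ≤ sphereInf fun x => t * ((Gt A σ t *ᵥ x) ⬝ᵥ x) :=
            sphereInf_mono (G2t_mulVec_dotProduct_nonneg A σ ht.le) fun x _ =>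
              G2t_mulVec_dotProduct_le A σ ht.le x
        _ = t * lamT A σ t := sphereInf_const_mul _ ht.le
    rw [ge_iff_le, div_le_iff₀ ht]
    linarith
  · rw [ge_iff_le, div_mul_eq_mul_div, div_le_div_iff_of_pos_right ht]
    have hL := lamT_nonneg A σ (sub_nonneg.2 hst.le)
    refine (sphereInf_const_mul _ hL).symm.trans_le (sphereInf_mono (fun x => ?_)
      fun x _ => lamT_mul_integral_le_G2t A σ hs.le hst.le x)
    exact mul_nonneg hL (intervalIntegral.integral_nonneg hs.le fun v _ =>
      Finset.sum_nonneg fun _ _ => mul_self_nonneg _)
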